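/- Let su(2,1) be the real Lie algebra of complex 3×3 trace-free matrices A satisfying Aᴴη + ηA = 0, where η = diag(1,1,−1), with ℝ-basis Z' = (1/√3)·i(E₁₁ + E₃₃ − 2E₂₂), X = i(E₁₁ − E₃₃), W = i(E₁₃ − E₃₁), Y = E₁₃ + E₃₁, U = E₁₂ − E₂₁, V = i(E₁₂ + E₂₁), S = E₂₃ + E₃₂, T = i(E₂₃ − E₃₂). Let J₂, J₃ be the ℝ-linear maps defined on this basis by J₃: Z' ↦ X, X ↦ −Z', Y ↦ W, W ↦ −Y, U ↦ V, V ↦ −U, S ↦ T, T ↦ −S and J₂: Z' ↦ W, W ↦ Z', X ↦ Y, Y ↦ X, U ↦ T, T ↦ U, V ↦ S, S ↦ V, with J₁ := J₃J₂. Then the biinvariant scalar product B(A,C) := ½·Re(tr(AC)) (which is proportional to the Killing form of su(2,1)) is hyper-parahermitian with respect to this structure: B(J₁A, J₁C) = B(J₂A, J₂C) = −B(A,C) and B(J₃A, J₃C) = B(A,C) for all A, C ∈ su(2,1). -/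

import Mathlib

open Matrix

/-- `E j k`: the complex 3×3 matrix with 1 in row `j`, column `k`, and 0 elsewhere
(indices `0,1,2` corresponding to `1,2,3`). -/
noncomputable def Em (j k : Fin 3) : Matrix (Fin 3) (Fin 3) ℂ := Matrix.single j k 1

/-- `η = diag(1,1,−1)`. -/
noncomputable def eta : Matrix (Fin 3) (Fin 3) ℂ := Matrix.diagonal ![1, 1, -1]

/-- `Z' = (1/√3)·i(E₁₁ + E₃₃ − 2E₂₂)`. -/
noncomputable def Zm' : Matrix (Fin 3) (Fin 3) ℂ :=
  (Real.sqrt 3)⁻¹ • (Complex.I • (Em 0 0 + Em 2 2 - 2 • Em 1 1))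
noncomputable def Xm : Matrix (Fin 3) (Fin 3) ℂ := Complex.I • (Em 0 0 - Em 2 2)
noncomputable def Wm : Matrix (Fin 3) (Fin 3) ℂ := Complex.I • (Em 0 2 - Em 2 0)
noncomputable def Ym : Matrix (Fin 3) (Fin 3) ℂ := Em 0 2 + Em 2 0
noncomputable def Um : Matrix (Fin 3) (Fin 3) ℂ := Em 0 1 - Em 1 0
noncomputable def Vm : Matrix (Fin 3) (Fin 3) ℂ := Complex.I • (Em 0 1 + Em 1 0)
noncomputable def Sm : Matrix (Fin 3) (Fin 3) ℂ := Em 1 2 + Em 2 1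
noncomputable def Tm : Matrix (Fin 3) (Fin 3) ℂ := Complex.I • (Em 1 2 - Em 2 1)

/-- The biinvariant scalar product `B(A,C) = ½·Re(tr(AC))` on `su(2,1)`, proportional to
the Killing form. -/
noncomputable def Bform (A C : Matrix (Fin 3) (Fin 3) ℂ) : ℝ :=
  (1 / 2 : ℝ) * ((A * C).trace).re

/-! In the real coordinates `A = z Z' + x X + w W + y Y + u U + v V + s S + t T` of `su(2,1)`,
`B` is the diagonal form `-(z z' + x x' + u u' + v v') + (w w' + y y' + s s' + t t')` of
signature `(4,4)`. `J₃` rotates within the pairs `(Z', X), (U, V)` of negative and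
`(Y, W), (S, T)` of positive coordinates, so it preserves `B`; `J₂` exchanges each negative
coordinate with a positive one, so it reverses `B`, and hence so does `J₁ = J₃ J₂`. -/

open ComplexConjugate

noncomputable def su21OfCoords (z x w y u v s t : ℝ) : Matrix (Fin 3) (Fin 3) ℂ :=
  z • Zm' + x • Xm + w • Wm + y • Ym + u • Um + v • Vm + s • Sm + t • Tm

lemma su21OfCoords_eq (z x w y u v s t : ℝ) :
    su21OfCoords z x w y u v s t =
      !![(z / Real.sqrt 3 + x) * Complex.I, u + v * Complex.I, y + w * Complex.I;
         -u + v * Complex.I, -2 * z / Real.sqrt 3 * Complex.I, s + t * Complex.I;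
         y - w * Complex.I, s - t * Complex.I, (z / Real.sqrt 3 - x) * Complex.I] := by
  ext i j
  fin_cases i <;> fin_cases j <;>
    simp [su21OfCoords, Zm', Xm, Wm, Ym, Um, Vm, Sm, Tm, Em, Matrix.single,
      Complex.real_smul] <;> ring

lemma Bform_su21OfCoords (z x w y u v s t z' x' w' y' u' v' s' t' : ℝ) :
    Bform (su21OfCoords z x w y u v s t) (su21OfCoords z' x' w' y' u' v' s' t') =
      -(z * z' + x * x' + u * u' + v * v') + (w * w' + y * y' + s * s' + t * t') := by
  have h3 : Real.sqrt 3 ^ 2 = 3 := Real.sq_sqrt (by norm_num)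
  have h3' : Real.sqrt 3 ≠ 0 := by positivity
  rw [su21OfCoords_eq, su21OfCoords_eq, Bform, Matrix.trace_fin_three]
  simp only [one_div, neg_mul, Matrix.mul_apply, of_apply, cons_val', cons_val_fin_one,
    cons_val_zero, Fin.sum_univ_three, cons_val_one, cons_val, Complex.add_re, Complex.mul_re,
    Complex.div_ofReal_re, Complex.ofReal_re, Complex.I_re, mul_zero, Complex.add_im,
    Complex.div_ofReal_im, Complex.ofReal_im, zero_div, add_zero, Complex.I_im, mul_one, sub_self,
    Complex.mul_im, zero_sub, Complex.neg_re, mul_neg, zero_add, Complex.neg_im, neg_zero,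
    Complex.sub_re, sub_zero, Complex.sub_im, sub_neg_eq_add, Complex.re_ofNat, Complex.im_ofNat,
    zero_mul, neg_add_rev]
  field_simp
  linear_combination 2 * z * z' * h3

lemma conj_apply_mul_eta_add_eta_mul_apply_eq_zero {A : Matrix (Fin 3) (Fin 3) ℂ}
    (hA : Aᴴ * eta + eta * A = 0) (j k : Fin 3) :
    conj (A k j) * ![1, 1, -1] k + ![1, 1, -1] j * A j k = 0 := by
  simpa [eta, Matrix.mul_diagonal, Matrix.diagonal_mul] using congrFun (congrFun hA j) k

lemma exists_eq_su21OfCoords {A : Matrix (Fin 3) (Fin 3) ℂ} (htr : A.trace = 0)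
    (hA : Aᴴ * eta + eta * A = 0) :
    ∃ z x w y u v s t : ℝ, A = su21OfCoords z x w y u v s t := by
  have e := conj_apply_mul_eta_add_eta_mul_apply_eq_zero hA
  have e00 := e 0 0; have e11 := e 1 1; have e22 := e 2 2
  have e01 := e 0 1; have e02 := e 0 2; have e12 := e 1 2
  simp only [Complex.ext_iff, cons_val_zero, cons_val_one, cons_val, mul_one, one_mul, mul_neg,
    neg_mul, Complex.add_re, Complex.add_im, Complex.neg_re, Complex.neg_im, Complex.conj_re,
    Complex.conj_im, Complex.zero_re, Complex.zero_im, add_self_eq_zero, neg_add_cancel,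
    add_neg_cancel, neg_eq_zero, neg_neg, and_true, trace_fin_three] at e00 e11 e22 e01 e02 e12 htr
  -- read off from `A 0 0 = (z / √3 + x) i` and `A 1 1 = -2 z / √3 i`
  refine ⟨-(Real.sqrt 3 / 2) * (A 1 1).im, (A 0 0).im + (A 1 1).im / 2, (A 0 2).im, (A 0 2).re,
    (A 0 1).re, (A 0 1).im, (A 1 2).re, (A 1 2).im, ?_⟩
  have h3 : Real.sqrt 3 ≠ 0 := by positivity
  rw [su21OfCoords_eq]
  ext i j
  fin_cases i <;> fin_cases j <;> apply Complex.ext <;> simp <;> (try field_simp) <;> linarith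

section

variable (J : Matrix (Fin 3) (Fin 3) ℂ →ₗ[ℝ] Matrix (Fin 3) (Fin 3) ℂ)

lemma J2_apply_su21OfCoords
    (hZ : J Zm' = Wm) (hW : J Wm = Zm') (hX : J Xm = Ym) (hY : J Ym = Xm)
    (hU : J Um = Tm) (hT : J Tm = Um) (hV : J Vm = Sm) (hS : J Sm = Vm)
    (z x w y u v s t : ℝ) :
    J (su21OfCoords z x w y u v s t) = su21OfCoords w y z x t s v u := by
  simp only [su21OfCoords, map_add, map_smul, hZ, hX, hW, hY, hU, hV, hS, hT]
  module

lemma J3_apply_su21OfCoords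
    (hZ : J Zm' = Xm) (hX : J Xm = -Zm') (hY : J Ym = Wm) (hW : J Wm = -Ym)
    (hU : J Um = Vm) (hV : J Vm = -Um) (hS : J Sm = Tm) (hT : J Tm = -Sm)
    (z x w y u v s t : ℝ) :
    J (su21OfCoords z x w y u v s t) = su21OfCoords (-x) z y (-w) (-v) u (-t) s := by
  simp only [su21OfCoords, map_add, map_smul, hZ, hX, hW, hY, hU, hV, hS, hT]
  module

end

/-- On `su(2,1)` (trace-free `A` with `Aᴴη + ηA = 0`, `η = diag(1,1,−1)`) with the
hyper-paracomplex structure defined on the normalized basis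
`Z', X, W, Y, U, V, S, T` by `J₃: Z' ↦ X, X ↦ −Z', Y ↦ W, W ↦ −Y, U ↦ V, V ↦ −U, S ↦ T,
T ↦ −S`, `J₂: Z' ↦ W, W ↦ Z', X ↦ Y, Y ↦ X, U ↦ T, T ↦ U, V ↦ S, S ↦ V`, `J₁ := J₃J₂`,
the biinvariant scalar product `B(A,C) = ½·Re(tr(AC))` is hyper-parahermitian:
`B(J₁A,J₁C) = B(J₂A,J₂C) = −B(A,C)` and `B(J₃A,J₃C) = B(A,C)` for all
`A, C ∈ su(2,1)`. -/
theorem stmt_19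
    (J2 J3 : Matrix (Fin 3) (Fin 3) ℂ →ₗ[ℝ] Matrix (Fin 3) (Fin 3) ℂ)
    (hJ3Z : J3 Zm' = Xm) (hJ3X : J3 Xm = -Zm') (hJ3Y : J3 Ym = Wm) (hJ3W : J3 Wm = -Ym)
    (hJ3U : J3 Um = Vm) (hJ3V : J3 Vm = -Um) (hJ3S : J3 Sm = Tm) (hJ3T : J3 Tm = -Sm)
    (hJ2Z : J2 Zm' = Wm) (hJ2W : J2 Wm = Zm') (hJ2X : J2 Xm = Ym) (hJ2Y : J2 Ym = Xm)
    (hJ2U : J2 Um = Tm) (hJ2T : J2 Tm = Um) (hJ2V : J2 Vm = Sm) (hJ2S : J2 Sm = Vm) :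
    ∀ A C : Matrix (Fin 3) (Fin 3) ℂ,
      A.trace = 0 → Aᴴ * eta + eta * A = 0 →
      C.trace = 0 → Cᴴ * eta + eta * C = 0 →
        Bform (J3 (J2 A)) (J3 (J2 C)) = -Bform A C
        ∧ Bform (J2 A) (J2 C) = -Bform A C
        ∧ Bform (J3 A) (J3 C) = Bform A C := by
  intro A C htrA hA htrC hC
  obtain ⟨z, x, w, y, u, v, s, t, rfl⟩ := exists_eq_su21OfCoords htrA hA
  obtain ⟨z', x', w', y', u', v', s', t', rfl⟩ := exists_eq_su21OfCoords htrC hC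
  have hJ2 := J2_apply_su21OfCoords J2 hJ2Z hJ2W hJ2X hJ2Y hJ2U hJ2T hJ2V hJ2S
  have hJ3 := J3_apply_su21OfCoords J3 hJ3Z hJ3X hJ3Y hJ3W hJ3U hJ3V hJ3S hJ3T
  simp only [hJ2, hJ3, Bform_su21OfCoords]
  exact ⟨by ring, by ring, by ring⟩
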